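/- arXiv:2303.17507 — 3 statements merged into one kernel-verified Lean document; each statement's English description precedes it below -/
import Mathlib

section
/- In ℂ³ ⊗ ℂ³, let a₁, a₂, a₃ > 0 with a₁² + a₂² + a₃² = 1 and let |ψ⟩ = a₁|0⟩⊗|0⟩ + a₂|1⟩⊗|1⟩ + a₃|2⟩⊗|2⟩. Then the eight product vectors (a₂|0⟩ − a₁|1⟩)⊗(|0⟩+|1⟩), |0⟩⊗|1⟩, |1⟩⊗|0⟩, (a₃|0⟩ − a₁|2⟩)⊗(|0⟩+|2⟩), |0⟩⊗|2⟩, |2⟩⊗|0⟩, |1⟩⊗|2⟩, |2⟩⊗|1⟩ are each orthogonal to |ψ⟩, are linearly independent, and span the orthogonal complement of |ψ⟩ in ℂ³ ⊗ ℂ³. -/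
open scoped ComplexConjugate

/-! For a product vector, `⟪u ⊗ w, ψ⟫ = Σₖ aₖ · conj (uₖ wₖ)` only sees the diagonal coordinates,
and on each of the eight vectors the diagonal terms cancel in pairs or vanish. Reading off the
coordinates `(1,1)` and `(2,2)` (weight `-a₁ ≠ 0`) and then the off-diagonal ones shows the eight
vectors are independent; as `ψ ≠ 0`, its orthogonal complement has dimension `9 - 1 = 8`, so they
span it. -/

/-- The product (tensor) vector u ⊗ w in ℂ^{d₁} ⊗ ℂ^{d₂} ≅ ℂ^{d₁·d₂}. -/
noncomputable def tp {d₁ d₂ : ℕ} (u : EuclideanSpace ℂ (Fin d₁))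
    (w : EuclideanSpace ℂ (Fin d₂)) : EuclideanSpace ℂ (Fin d₁ × Fin d₂) :=
  WithLp.toLp 2 (fun p : Fin d₁ × Fin d₂ => u p.1 * w p.2)

/-- The standard basis vector |i⟩ of ℂ³. -/
noncomputable def e (i : Fin 3) : EuclideanSpace ℂ (Fin 3) := EuclideanSpace.single i 1

theorem span_eq_orthogonal_singleton_of_linearIndependent {𝕜 E ι : Type*} [RCLike 𝕜]
    [NormedAddCommGroup E] [InnerProductSpace 𝕜 E] [FiniteDimensional 𝕜 E] [Fintype ι]
    {v : ι → E} {ψ : E} (hψ : ψ ≠ 0) (hv : LinearIndependent 𝕜 v)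
    (horth : ∀ i, inner 𝕜 (v i) ψ = 0) (hcard : Fintype.card ι + 1 = Module.finrank 𝕜 E) :
    Submodule.span 𝕜 (Set.range v) = (𝕜 ∙ ψ)ᗮ := by
  have hle : Submodule.span 𝕜 (Set.range v) ≤ (𝕜 ∙ ψ)ᗮ := by
    rw [Submodule.span_le]
    rintro _ ⟨i, rfl⟩
    exact Submodule.mem_orthogonal_singleton_iff_inner_left.mpr (horth i)
  refine Submodule.eq_of_le_of_finrank_eq hle ?_
  have := (𝕜 ∙ ψ).finrank_add_finrank_orthogonal
  rw [finrank_span_singleton hψ] at this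
  rw [finrank_span_eq_card hv]
  omega

theorem tp_apply {d₁ d₂ : ℕ} (u : EuclideanSpace ℂ (Fin d₁)) (w : EuclideanSpace ℂ (Fin d₂))
    (p : Fin d₁ × Fin d₂) : tp u w p = u p.1 * w p.2 := rfl

theorem e_apply (i j : Fin 3) : e i j = if j = i then 1 else 0 :=
  PiLp.single_apply 2 ℂ i 1 j

noncomputable def schmidtState (a₁ a₂ a₃ : ℝ) : EuclideanSpace ℂ (Fin 3 × Fin 3) :=
  (a₁ : ℂ) • tp (e 0) (e 0) + (a₂ : ℂ) • tp (e 1) (e 1) + (a₃ : ℂ) • tp (e 2) (e 2)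

noncomputable def productFamily (a₁ a₂ a₃ : ℝ) : Fin 8 → EuclideanSpace ℂ (Fin 3 × Fin 3) :=
  ![tp ((a₂ : ℂ) • e 0 - (a₁ : ℂ) • e 1) (e 0 + e 1),
    tp (e 0) (e 1), tp (e 1) (e 0),
    tp ((a₃ : ℂ) • e 0 - (a₁ : ℂ) • e 2) (e 0 + e 2),
    tp (e 0) (e 2), tp (e 2) (e 0),
    tp (e 1) (e 2), tp (e 2) (e 1)]

theorem schmidtState_apply_zero_zero (a₁ a₂ a₃ : ℝ) : schmidtState a₁ a₂ a₃ (0, 0) = a₁ := by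
  simp [schmidtState, tp_apply, e_apply]

theorem schmidtState_ne_zero {a₁ : ℝ} (ha : a₁ ≠ 0) (a₂ a₃ : ℝ) : schmidtState a₁ a₂ a₃ ≠ 0 :=
  fun h => ha <| by simpa [h] using (schmidtState_apply_zero_zero a₁ a₂ a₃).symm

theorem inner_tp_schmidtState (u w : EuclideanSpace ℂ (Fin 3)) (a₁ a₂ a₃ : ℝ) :
    inner ℂ (tp u w) (schmidtState a₁ a₂ a₃) =
      a₁ * conj (u 0 * w 0) + a₂ * conj (u 1 * w 1) + a₃ * conj (u 2 * w 2) := by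
  simp [schmidtState, PiLp.inner_apply, tp_apply, e_apply, Fintype.sum_prod_type]

theorem inner_productFamily_schmidtState (a₁ a₂ a₃ : ℝ) (i : Fin 8) :
    inner ℂ (productFamily a₁ a₂ a₃ i) (schmidtState a₁ a₂ a₃) = 0 := by
  fin_cases i <;> simp [productFamily, inner_tp_schmidtState, e_apply] <;> ring

theorem linearIndependent_productFamily {a₁ : ℝ} (ha : a₁ ≠ 0) (a₂ a₃ : ℝ) :
    LinearIndependent ℂ (productFamily a₁ a₂ a₃) := by
  rw [Fintype.linearIndependent_iff]
  intro g hg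
  have coord (p : Fin 3 × Fin 3) : ∑ i, g i * productFamily a₁ a₂ a₃ i p = 0 := by
    simpa using congrArg (· p) hg
  have h11 := coord (1, 1); have h22 := coord (2, 2); have h01 := coord (0, 1)
  have h10 := coord (1, 0); have h02 := coord (0, 2); have h20 := coord (2, 0)
  have h12 := coord (1, 2); have h21 := coord (2, 1)
  simp [Fin.sum_univ_eight, productFamily, tp_apply, e_apply, ha]
    at h11 h22 h01 h10 h02 h20 h12 h21
  intro i
  fin_cases i <;> simp_all

theorem stmt4_general (a₁ a₂ a₃ : ℝ) (h₁ : 0 < a₁)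
    (ψ : EuclideanSpace ℂ (Fin 3 × Fin 3))
    (hψ : ψ = (a₁ : ℂ) • tp (e 0) (e 0) + (a₂ : ℂ) • tp (e 1) (e 1)
            + (a₃ : ℂ) • tp (e 2) (e 2))
    (v : Fin 8 → EuclideanSpace ℂ (Fin 3 × Fin 3))
    (hv : v = ![tp ((a₂ : ℂ) • e 0 - (a₁ : ℂ) • e 1) (e 0 + e 1),
                tp (e 0) (e 1), tp (e 1) (e 0),
                tp ((a₃ : ℂ) • e 0 - (a₁ : ℂ) • e 2) (e 0 + e 2),
                tp (e 0) (e 2), tp (e 2) (e 0),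
                tp (e 1) (e 2), tp (e 2) (e 1)]) :
    (∀ i, inner ℂ (v i) ψ = (0 : ℂ)) ∧ LinearIndependent ℂ v ∧
      Submodule.span ℂ (Set.range v) = (ℂ ∙ ψ)ᗮ := by
  obtain rfl : ψ = schmidtState a₁ a₂ a₃ := hψ
  obtain rfl : v = productFamily a₁ a₂ a₃ := hv
  have horth := inner_productFamily_schmidtState a₁ a₂ a₃
  have hli := linearIndependent_productFamily h₁.ne' a₂ a₃
  refine ⟨horth, hli, span_eq_orthogonal_singleton_of_linearIndependent
    (schmidtState_ne_zero h₁.ne' a₂ a₃) hli horth ?_⟩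
  simp

/-- the eight product vectors are orthogonal to ψ, linearly
independent, and span the orthogonal complement of ψ in ℂ³ ⊗ ℂ³. -/
theorem stmt4 (a₁ a₂ a₃ : ℝ) (h₁ : 0 < a₁) (h₂ : 0 < a₂) (h₃ : 0 < a₃)
    (hn : a₁ ^ 2 + a₂ ^ 2 + a₃ ^ 2 = 1)
    (ψ : EuclideanSpace ℂ (Fin 3 × Fin 3))
    (hψ : ψ = (a₁ : ℂ) • tp (e 0) (e 0) + (a₂ : ℂ) • tp (e 1) (e 1)
            + (a₃ : ℂ) • tp (e 2) (e 2))
    (v : Fin 8 → EuclideanSpace ℂ (Fin 3 × Fin 3))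
    (hv : v = ![tp ((a₂ : ℂ) • e 0 - (a₁ : ℂ) • e 1) (e 0 + e 1),
                tp (e 0) (e 1), tp (e 1) (e 0),
                tp ((a₃ : ℂ) • e 0 - (a₁ : ℂ) • e 2) (e 0 + e 2),
                tp (e 0) (e 2), tp (e 2) (e 0),
                tp (e 1) (e 2), tp (e 2) (e 1)]) :
    (∀ i, inner ℂ (v i) ψ = (0 : ℂ)) ∧ LinearIndependent ℂ v ∧
      Submodule.span ℂ (Set.range v) = (ℂ ∙ ψ)ᗮ :=
  stmt4_general a₁ a₂ a₃ h₁ ψ hψ v hv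
end

section
/- Let S be a linear subspace of ℂ^{d₁} ⊗ ℂ^{d₂} containing no nonzero product vector (an entangled subspace). Then dim S ≤ (d₁ − 1)(d₂ − 1). -/
open scoped ComplexConjugate

/-!
Let `y₁, …, y_c` be a basis of `Sᗮ`. A product vector `u ⊗ w` lies in `S` iff the `c` bilinear
forms `B_l(u, w) = ⟪y_l, u ⊗ w⟫` vanish at `(u, w)`, so these forms have no common zero with
`u ≠ 0` and `w ≠ 0`; it suffices to show that this forces `c ≥ d₁ + d₂ - 1`.

In `k[x, z]` (`k` algebraically closed) the Nullstellensatz puts a power `(x_i z_j)^(N+1)` of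
every product of an `x`- and a `z`-variable into the ideal of the forms, and taking bihomogeneous
components the cofactors can be chosen balanced (of equal degree in `x` and in `z`) of degree
`2N`. Reducing monomials with these relations shows that the balanced polynomials (the coordinate
ring of the Segre cone) form a finite module over `k[B_1, …, B_c]`. That ring contains the
`d₁ + d₂ - 1` algebraically independent elements `x₀z₀, x_i z₀, x₀z_j`, each of them algebraic over
`k[B_1, …, B_c]`, so `d₁ + d₂ - 1 ≤ c` by counting transcendence degree.
-/

open MvPolynomial Matrix

noncomputable section

namespace MvPolynomial

variable {R σ M : Type*} [CommSemiring R]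

theorem weightedHomogeneousComponent_mul_of_isWeightedHomogeneous [AddCancelCommMonoid M]
    (w : σ → M) {g : MvPolynomial σ R} {e : M} (hg : g.IsWeightedHomogeneous w e) (d : M)
    (f : MvPolynomial σ R) :
    weightedHomogeneousComponent w (d + e) (f * g) = weightedHomogeneousComponent w d f * g := by
  induction f using MvPolynomial.induction_on' with
  | monomial μ r =>
    have hμ := isWeightedHomogeneous_monomial w μ r rfl
    by_cases h : Finsupp.weight w μ = d
    · subst h
      rw [(hμ.mul hg).weightedHomogeneousComponent_same, hμ.weightedHomogeneousComponent_same]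
    · rw [(hμ.mul hg).weightedHomogeneousComponent_ne _ (by simpa [eq_comm] using h),
        hμ.weightedHomogeneousComponent_ne _ (Ne.symm h), zero_mul]
  | add p q hp hq => rw [add_mul, map_add, map_add, hp, hq, add_mul]

theorem sum_mul_eq_sum_weightedHomogeneousComponent_mul [AddCancelCommMonoid M] {ι : Type*}
    [Fintype ι] {w : σ → M} {g : ι → MvPolynomial σ R} {d e : M}
    (hg : ∀ i, (g i).IsWeightedHomogeneous w e) (c : ι → MvPolynomial σ R)
    (h : (∑ i, c i * g i).IsWeightedHomogeneous w (d + e)) :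
    ∑ i, c i * g i = ∑ i, weightedHomogeneousComponent w d (c i) * g i := by
  conv_lhs => rw [← h.weightedHomogeneousComponent_same]
  simp only [map_sum, weightedHomogeneousComponent_mul_of_isWeightedHomogeneous w (hg _)]

theorem IsWeightedHomogeneous.weightedHomogeneousComponent [AddCommMonoid M] {N : Type*}
    [AddCommMonoid N] {w : σ → M} {f : MvPolynomial σ R} {m : M}
    (hf : f.IsWeightedHomogeneous w m) (w' : σ → N) (d : N) :
    (weightedHomogeneousComponent w' d f).IsWeightedHomogeneous w m := by
  classical
  intro μ hμ
  rw [coeff_weightedHomogeneousComponent] at hμ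
  split_ifs at hμ
  · exact hf hμ
  · exact absurd rfl hμ

theorem mem_of_forall_monomial_one_mem {B : Subalgebra R (MvPolynomial σ R)}
    {P : Submodule B (MvPolynomial σ R)} {f : MvPolynomial σ R}
    (h : ∀ μ ∈ f.support, monomial μ 1 ∈ P) : f ∈ P := by
  rw [f.as_sum]
  refine Submodule.sum_mem _ fun μ hμ => ?_
  rw [← mul_one (coeff μ f), ← smul_eq_mul, ← smul_monomial]
  exact Submodule.smul_of_tower_mem _ _ (h μ hμ)

end MvPolynomial

theorem AlgebraicIndependent.card_le_of_isAlgebraic {R A ι κ : Type*} [CommRing R]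
    [Nontrivial R] [CommRing A] [IsDomain A] [Algebra R A] [FaithfulSMul R A] [Fintype ι]
    [Fintype κ] {x : ι → A} (hx : AlgebraicIndependent R x) (y : κ → A)
    (halg : ∀ i, IsAlgebraic (Algebra.adjoin R (Set.range y)) (x i)) :
    Fintype.card ι ≤ Fintype.card κ := by
  have hind : (AlgebraicIndependent.matroid R A).Indep (Set.range x) :=
    AlgebraicIndependent.matroid_indep_iff.2 hx.to_subtype_range
  have hsub : Set.range x ⊆ (AlgebraicIndependent.matroid R A).closure (Set.range y) := by
    rw [AlgebraicIndependent.matroid_closure_eq]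
    rintro _ ⟨i, rfl⟩
    exact halg i
  have hrk := (hind.encard_le_eRk_of_subset hsub).trans
    (((AlgebraicIndependent.matroid R A).eRk_closure_eq _).trans_le
      ((AlgebraicIndependent.matroid R A).eRk_le_encard _))
  have hy : (Set.range y).encard ≤ ENat.card κ := by
    rw [← Set.image_univ, ← Set.encard_univ]
    exact Set.encard_image_le y _
  have := (hx.injective.encard_range.trans hrk).trans hy
  simpa only [ENat.card_eq_coe_fintype_card, Nat.cast_le] using this

theorem Submodule.mem_of_forall_inner_basis_orthogonal_eq_zero {𝕜 E ι : Type*} [RCLike 𝕜]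
    [NormedAddCommGroup E] [InnerProductSpace 𝕜 E] {K : Submodule 𝕜 E}
    [K.HasOrthogonalProjection] (b : Module.Basis ι 𝕜 Kᗮ) {v : E}
    (hv : ∀ i, inner 𝕜 (b i : E) v = 0) : v ∈ K := by
  rw [← K.orthogonal_orthogonal, mem_orthogonal]
  intro u hu
  have := b.ext (f₁ := ((innerₛₗ 𝕜).flip v).comp Kᗮ.subtype) (f₂ := 0) hv
  exact LinearMap.congr_fun this ⟨u, hu⟩

namespace Segre

variable {k : Type*} [Field k] {m n : Type*}

def balanceWeight (m n : Type*) : m ⊕ n → ℤ := Sum.elim 1 (-1)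

/-- With `x = X ∘ Sum.inl` and `z = X ∘ Sum.inr`, every monomial of a balanced polynomial has the
same degree in `x` as in `z`: these are the functions on the Segre cone. -/
def IsBalanced (f : MvPolynomial (m ⊕ n) k) : Prop :=
  f.IsWeightedHomogeneous (balanceWeight m n) 0

theorem IsBalanced.mul {f g : MvPolynomial (m ⊕ n) k} (hf : IsBalanced f)
    (hg : IsBalanced g) : IsBalanced (f * g) := by
  simpa [IsBalanced] using IsWeightedHomogeneous.mul hf hg

theorem IsBalanced.pow {f : MvPolynomial (m ⊕ n) k} (hf : IsBalanced f) (e : ℕ) :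
    IsBalanced (f ^ e) := by
  simpa [IsBalanced] using IsWeightedHomogeneous.pow hf e

theorem isBalanced_of_mem_adjoin {κ : Type*} {g : κ → MvPolynomial (m ⊕ n) k}
    (hg : ∀ l, IsBalanced (g l)) {f : MvPolynomial (m ⊕ n) k}
    (hf : f ∈ Algebra.adjoin k (Set.range g)) : IsBalanced f := by
  induction hf using Algebra.adjoin_induction with
  | mem x hx => obtain ⟨l, rfl⟩ := hx; exact hg l
  | algebraMap r => exact isWeightedHomogeneous_C _ r
  | add x y _ _ hx hy => exact hx.add hy
  | mul x y _ _ hx hy => exact hx.mul hy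

def prodVar (i : m) (j : n) : MvPolynomial (m ⊕ n) k := X (.inl i) * X (.inr j)

theorem isBalanced_prodVar (i : m) (j : n) : IsBalanced (prodVar i j : MvPolynomial _ k) := by
  simpa [IsBalanced, balanceWeight, prodVar] using
    (isWeightedHomogeneous_X k (balanceWeight m n) (.inl i)).mul
      (isWeightedHomogeneous_X k (balanceWeight m n) (.inr j))

theorem isHomogeneous_prodVar (i : m) (j : n) :
    (prodVar i j : MvPolynomial _ k).IsHomogeneous 2 :=
  (isHomogeneous_X k _).mul (isHomogeneous_X k _)

theorem prodVar_pow (i : m) (j : n) (e : ℕ) :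
    (prodVar i j : MvPolynomial _ k) ^ e =
      monomial (.single (.inl i) e + .single (.inr j) e) 1 := by
  rw [prodVar, mul_pow, X_pow_eq_monomial, X_pow_eq_monomial, monomial_mul, one_mul]

theorem exists_prodVar_pow_eq_sum_mul {κ : Type*} [Fintype κ] {g : κ → MvPolynomial (m ⊕ n) k}
    (hgb : ∀ l, IsBalanced (g l)) (hgh : ∀ l, (g l).IsHomogeneous 2) {i : m} {j : n} {N : ℕ}
    (hmem : prodVar i j ^ (N + 1) ∈ Ideal.span (Set.range g)) :
    ∃ h : κ → MvPolynomial (m ⊕ n) k, (∀ l, IsBalanced (h l) ∧ (h l).IsHomogeneous (2 * N)) ∧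
      prodVar i j ^ (N + 1) = ∑ l, h l * g l := by
  obtain ⟨c, hc⟩ := (Submodule.mem_span_range_iff_exists_fun _).1 hmem
  simp only [smul_eq_mul] at hc
  have hbal : IsBalanced (∑ l, c l * g l) := hc ▸ (isBalanced_prodVar i j).pow _
  have hhom : (∑ l, c l * g l).IsHomogeneous (2 * N + 2) := by
    rw [hc]; convert (isHomogeneous_prodVar i j).pow (N + 1) using 1; ring
  rw [← hc]
  rw [sum_mul_eq_sum_weightedHomogeneousComponent_mul (d := 0) (e := 0) hgb c
    ((add_zero (0 : ℤ)).symm ▸ hbal)] at hhom ⊢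
  rw [sum_mul_eq_sum_weightedHomogeneousComponent_mul hgh _ hhom]
  exact ⟨_, fun l =>
    ⟨(weightedHomogeneousComponent_isWeightedHomogeneous _ _).weightedHomogeneousComponent _ _,
      weightedHomogeneousComponent_isWeightedHomogeneous _ _⟩, rfl⟩

def prodVarFamily (i₀ : m) (j₀ : n) :
    Option ({i // i ≠ i₀} ⊕ {j // j ≠ j₀}) → MvPolynomial (m ⊕ n) k
  | none => prodVar i₀ j₀
  | some (.inl i) => prodVar i j₀
  | some (.inr j) => prodVar i₀ j

theorem isBalanced_prodVarFamily (i₀ : m) (j₀ : n) (v : Option ({i // i ≠ i₀} ⊕ {j // j ≠ j₀})) :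
    IsBalanced (prodVarFamily (k := k) i₀ j₀ v) := by
  rcases v with _ | _ | _ <;> exact isBalanced_prodVar _ _

theorem algebraicIndependent_prodVarFamily (i₀ : m) (j₀ : n) :
    AlgebraicIndependent k (prodVarFamily (k := k) i₀ j₀) := by
  classical
  let K := FractionRing (MvPolynomial (Option ({i // i ≠ i₀} ⊕ {j // j ≠ j₀})) k)
  let T := IsScalarTower.toAlgHom k (MvPolynomial (Option ({i // i ≠ i₀} ⊕ {j // j ≠ j₀})) k) K ∘ X
  have hT : AlgebraicIndependent k T :=
    (algebraicIndependent_X _ k).map' (IsFractionRing.injective _ K)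
  have hT0 : T none ≠ 0 := hT.ne_zero none
  -- Dehomogenise (`x_{i₀} ↦ 1`, `z_{j₀} ↦ T none`): the family becomes the variables `T`.
  let φ : m ⊕ n → K := Sum.elim
    (fun i => if h : i = i₀ then 1 else T (some (.inl ⟨i, h⟩)) / T none)
    (fun j => if h : j = j₀ then T none else T (some (.inr ⟨j, h⟩)))
  refine AlgebraicIndependent.of_comp (aeval φ) ?_
  convert hT using 1
  funext v
  rcases v with _ | ⟨i, hi⟩ | ⟨j, hj⟩
  · simp [prodVarFamily, prodVar, φ]
  · simp [prodVarFamily, prodVar, φ, hi, div_mul_cancel₀ _ hT0]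
  · simp [prodVarFamily, prodVar, φ, hj]

variable [Fintype m] [Fintype n]

theorem weight_balanceWeight (μ : m ⊕ n →₀ ℕ) :
    Finsupp.weight (balanceWeight m n) μ = ∑ i, (μ (.inl i) : ℤ) - ∑ j, (μ (.inr j) : ℤ) := by
  rw [Finsupp.weight_apply, Finsupp.sum_fintype _ _ (by simp), Fintype.sum_sum_type]
  simp [balanceWeight, sub_eq_add_neg]

theorem degree_eq_sum_add_sum (μ : m ⊕ n →₀ ℕ) :
    μ.degree = ∑ i, μ (.inl i) + ∑ j, μ (.inr j) := by
  rw [Finsupp.degree_eq_sum, Fintype.sum_sum_type]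

theorem degree_le_of_forall_le {μ : m ⊕ n →₀ ℕ} (hμ : Finsupp.weight (balanceWeight m n) μ = 0)
    {N : ℕ} (hN : (∀ i, μ (.inl i) ≤ N) ∨ ∀ j, μ (.inr j) ≤ N) :
    μ.degree ≤ 2 * N * (Fintype.card m + Fintype.card n) := by
  rw [weight_balanceWeight, sub_eq_zero] at hμ
  have hμ' : ∑ i, μ (.inl i) = ∑ j, μ (.inr j) := by exact_mod_cast hμ
  rw [degree_eq_sum_add_sum]
  rcases hN with h | h
  · have := Finset.sum_le_sum fun i (_ : i ∈ Finset.univ) => h i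
    simp only [Finset.sum_const, Finset.card_univ, smul_eq_mul] at this
    nlinarith
  · have := Finset.sum_le_sum fun j (_ : j ∈ Finset.univ) => h j
    simp only [Finset.sum_const, Finset.card_univ, smul_eq_mul] at this
    nlinarith

def bilinearForm (Y : Matrix m n k) : MvPolynomial (m ⊕ n) k :=
  ∑ i, ∑ j, C (Y i j) * prodVar i j

theorem isBalanced_bilinearForm (Y : Matrix m n k) : IsBalanced (bilinearForm Y) :=
  IsWeightedHomogeneous.sum _ _ _ fun i _ => IsWeightedHomogeneous.sum _ _ _ fun j _ =>
    (isBalanced_prodVar i j).C_mul _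

theorem isHomogeneous_bilinearForm (Y : Matrix m n k) : (bilinearForm Y).IsHomogeneous 2 :=
  IsHomogeneous.sum _ _ _ fun i _ => IsHomogeneous.sum _ _ _ fun j _ =>
    (isHomogeneous_prodVar i j).C_mul _

theorem eval_bilinearForm (Y : Matrix m n k) (x : m ⊕ n → k) :
    eval x (bilinearForm Y) = (x ∘ .inl) ⬝ᵥ Y *ᵥ (x ∘ .inr) := by
  simp only [bilinearForm, prodVar, map_sum, map_mul, eval_C, eval_X, dotProduct, mulVec,
    Function.comp_apply, Finset.mul_sum]
  exact Fintype.sum_congr _ _ fun i => Fintype.sum_congr _ _ fun j => by ring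

theorem exists_prodVar_pow_mem_span [IsAlgClosed k] {κ : Type*}
    (g : κ → MvPolynomial (m ⊕ n) k)
    (hg : ∀ x : m ⊕ n → k, (∀ l, eval x (g l) = 0) → x ∘ .inl = 0 ∨ x ∘ .inr = 0) :
    ∃ N, ∀ i j, prodVar i j ^ (N + 1) ∈ Ideal.span (Set.range g) := by
  let J : Ideal (MvPolynomial (m ⊕ n) k) :=
    Ideal.span (Set.range fun p : m × n => prodVar p.1 p.2)
  have hJ : J ≤ (Ideal.span (Set.range g)).radical := by
    rw [Ideal.span_le, ← vanishingIdeal_zeroLocus_eq_radical (K := k)]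
    rintro _ ⟨⟨i, j⟩, rfl⟩
    rw [SetLike.mem_coe, mem_vanishingIdeal_iff]
    intro x hx
    rcases hg x fun l => (mem_zeroLocus_iff.1 hx) _ (Ideal.subset_span ⟨l, rfl⟩) with h | h
    · simp [prodVar, show x (.inl i) = 0 from congrFun h i]
    · simp [prodVar, show x (.inr j) = 0 from congrFun h j]
  obtain ⟨N, hN⟩ :=
    Ideal.exists_pow_le_of_le_radical_of_fg hJ (Submodule.fg_span (Set.finite_range _))
  refine ⟨N, fun i j => hN (Ideal.pow_le_pow_right N.le_succ (Ideal.pow_mem_pow ?_ _))⟩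
  exact Ideal.subset_span ⟨(i, j), rfl⟩

def balancedMonomials (D : ℕ) : Set (MvPolynomial (m ⊕ n) k) :=
  (fun μ => monomial μ 1) '' {μ | Finsupp.weight (balanceWeight m n) μ = 0 ∧ μ.degree ≤ D}

theorem balancedMonomials_finite (D : ℕ) :
    (balancedMonomials D : Set (MvPolynomial (m ⊕ n) k)).Finite :=
  ((Finsupp.finite_of_degree_le D).subset fun _ hμ => hμ.2).image _

variable {κ : Type*} [Fintype κ] {g : κ → MvPolynomial (m ⊕ n) k}

theorem monomial_mem_span_balancedMonomials {N : ℕ}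
    (hpow : ∀ i j, ∃ h : κ → MvPolynomial (m ⊕ n) k,
      (∀ l, IsBalanced (h l) ∧ (h l).IsHomogeneous (2 * N)) ∧
        prodVar i j ^ (N + 1) = ∑ l, h l * g l)
    {μ : m ⊕ n →₀ ℕ} (hμ : Finsupp.weight (balanceWeight m n) μ = 0) :
    (monomial μ 1 : MvPolynomial (m ⊕ n) k) ∈ Submodule.span (Algebra.adjoin k (Set.range g))
      (balancedMonomials (2 * N * (Fintype.card m + Fintype.card n))) := by
  induction hd : μ.degree using Nat.strong_induction_on generalizing μ with
  | _ d ih =>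
  by_cases hbig : ∃ i j, N + 1 ≤ μ (.inl i) ∧ N + 1 ≤ μ (.inr j)
  · obtain ⟨i, j, hi, hj⟩ := hbig
    obtain ⟨h, hh, hpowij⟩ := hpow i j
    set s : m ⊕ n →₀ ℕ := .single (.inl i) (N + 1) + .single (.inr j) (N + 1)
    have hs : s ≤ μ := by
      refine Finsupp.le_def.2 fun x => ?_
      rcases x with i' | j'
      · by_cases hx : i' = i
        · subst hx; simpa [s] using hi
        · simp [s, Ne.symm hx]
      · by_cases hx : j' = j
        · subst hx; simpa [s] using hj
        · simp [s, Ne.symm hx]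
    obtain ⟨ν, rfl⟩ : ∃ ν, μ = ν + s := ⟨μ - s, (tsub_add_cancel_of_le hs).symm⟩
    have hs0 : Finsupp.weight (balanceWeight m n) s = 0 := by
      simp only [s, map_add, Finsupp.weight_single, balanceWeight]
      simp
    rw [map_add, hs0, add_zero] at hμ
    have hdeg : ν.degree + 2 * (N + 1) = d := by
      rw [← hd]; simp [s]; ring
    rw [← mul_one (1 : k), ← monomial_mul, ← prodVar_pow, hpowij, Finset.mul_sum]
    refine Submodule.sum_mem _ fun l _ => ?_
    have hrest : monomial ν 1 * h l ∈ Submodule.span (Algebra.adjoin k (Set.range g))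
        (balancedMonomials (2 * N * (Fintype.card m + Fintype.card n))) := by
      refine mem_of_forall_monomial_one_mem fun ρ hρ => ?_
      have hρbal := ((isWeightedHomogeneous_monomial _ _ (1 : k) hμ).mul (hh l).1)
        (mem_support_iff.1 hρ)
      have hρdeg := ((isHomogeneous_monomial (1 : k) rfl).mul (hh l).2) (mem_support_iff.1 hρ)
      replace hρdeg : ρ.degree = ν.degree + 2 * N := by
        rw [← hρdeg, Finsupp.degree_eq_weight_one]; rfl
      exact ih ρ.degree (by omega) (by simpa using hρbal) rfl
    have := Submodule.smul_mem _
      (⟨g l, Algebra.subset_adjoin ⟨l, rfl⟩⟩ : Algebra.adjoin k (Set.range g)) hrest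
    convert this using 1
    rw [Subalgebra.smul_def, smul_eq_mul]
    ring
  · refine Submodule.subset_span (Set.mem_image_of_mem _ ⟨hμ, degree_le_of_forall_le hμ ?_⟩)
    by_contra hc
    simp only [not_or, not_forall, not_le] at hc
    obtain ⟨⟨i, hi⟩, ⟨j, hj⟩⟩ := hc
    exact hbig ⟨i, j, hi, hj⟩

theorem isIntegral_of_isBalanced (hgb : ∀ l, IsBalanced (g l)) {N : ℕ}
    (hpow : ∀ i j, ∃ h : κ → MvPolynomial (m ⊕ n) k,
      (∀ l, IsBalanced (h l) ∧ (h l).IsHomogeneous (2 * N)) ∧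
        prodVar i j ^ (N + 1) = ∑ l, h l * g l)
    {f : MvPolynomial (m ⊕ n) k} (hf : IsBalanced f) :
    IsIntegral (Algebra.adjoin k (Set.range g)) f := by
  set M := Submodule.span (Algebra.adjoin k (Set.range g))
    (balancedMonomials (2 * N * (Fintype.card m + Fintype.card n)) :
      Set (MvPolynomial (m ⊕ n) k))
  have hM : ∀ p : MvPolynomial (m ⊕ n) k, IsBalanced p → p ∈ M := fun p hp =>
    mem_of_forall_monomial_one_mem fun μ hμ =>
      monomial_mem_span_balancedMonomials hpow (hp (mem_support_iff.1 hμ))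
  have hbalM : ∀ p ∈ M, IsBalanced p := by
    intro p hp
    induction hp using Submodule.span_induction with
    | mem x hx => obtain ⟨μ, hμ, rfl⟩ := hx; exact isWeightedHomogeneous_monomial _ _ _ hμ.1
    | zero => exact isWeightedHomogeneous_zero _ _ _
    | add x y _ _ hx hy => exact hx.add hy
    | smul b x _ hx =>
      rw [Subalgebra.smul_def, smul_eq_mul]
      exact (isBalanced_of_mem_adjoin hgb b.2).mul hx
  have hM0 : M ≠ ⊥ := fun h => one_ne_zero <| (Submodule.mem_bot _).1 <|
    h ▸ hM 1 (isWeightedHomogeneous_one _ _)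
  exact isIntegral_of_smul_mem_submodule M hM0 (Submodule.fg_span (balancedMonomials_finite _))
    f fun p hp => hM _ (hf.mul (hbalM p hp))

theorem card_add_card_le_card_add_one [IsAlgClosed k] [Nonempty m] [Nonempty n]
    (Y : κ → Matrix m n k) (hY : ∀ x z, (∀ l, x ⬝ᵥ Y l *ᵥ z = 0) → x = 0 ∨ z = 0) :
    Fintype.card m + Fintype.card n ≤ Fintype.card κ + 1 := by
  classical
  obtain ⟨i₀⟩ := ‹Nonempty m›
  obtain ⟨j₀⟩ := ‹Nonempty n›
  obtain ⟨N, hN⟩ := exists_prodVar_pow_mem_span (bilinearForm ∘ Y) fun x hx =>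
    hY _ _ fun l => by simpa [eval_bilinearForm] using hx l
  have hpow := fun i j => exists_prodVar_pow_eq_sum_mul (fun l => isBalanced_bilinearForm (Y l))
    (fun l => isHomogeneous_bilinearForm (Y l)) (hN i j)
  have := (algebraicIndependent_prodVarFamily i₀ j₀).card_le_of_isAlgebraic (bilinearForm ∘ Y)
    fun v => (isIntegral_of_isBalanced (fun l => isBalanced_bilinearForm (Y l)) hpow
      (isBalanced_prodVarFamily i₀ j₀ v)).isAlgebraic
  simp only [Fintype.card_option, Fintype.card_sum, Fintype.card_subtype_compl,
    Fintype.card_unique] at this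
  omega

end Segre

end

theorem tp_ne_zero {d₁ d₂ : ℕ} {u : EuclideanSpace ℂ (Fin d₁)} {w : EuclideanSpace ℂ (Fin d₂)}
    (hu : u ≠ 0) (hw : w ≠ 0) : tp u w ≠ 0 := by
  obtain ⟨p, hp⟩ : ∃ p, u p ≠ 0 := by by_contra! h; exact hu (PiLp.ext h)
  obtain ⟨q, hq⟩ : ∃ q, w q ≠ 0 := by by_contra! h; exact hw (PiLp.ext h)
  intro h
  exact mul_ne_zero hp hq (congrArg (· (p, q)) h)

theorem inner_tp {d₁ d₂ : ℕ} (y : EuclideanSpace ℂ (Fin d₁ × Fin d₂)) (x : Fin d₁ → ℂ)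
    (z : Fin d₂ → ℂ) :
    inner ℂ y (tp (WithLp.toLp 2 x) (WithLp.toLp 2 z)) =
      x ⬝ᵥ Matrix.of (fun p q => conj (y (p, q))) *ᵥ z := by
  simp only [tp, PiLp.inner_apply, RCLike.inner_apply, Fintype.sum_prod_type, dotProduct, mulVec,
    Finset.mul_sum, of_apply]
  exact Fintype.sum_congr _ _ fun i => Fintype.sum_congr _ _ fun j => by ring

theorem eq_zero_or_eq_zero_of_forall_inner_tp_eq_zero {d₁ d₂ : ℕ} {ι : Type*}
    {S : Submodule ℂ (EuclideanSpace ℂ (Fin d₁ × Fin d₂))}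
    (hS : ∀ x ∈ S, x ≠ 0 →
      ¬ ∃ (u : EuclideanSpace ℂ (Fin d₁)) (w : EuclideanSpace ℂ (Fin d₂)), x = tp u w)
    (b : Module.Basis ι ℂ Sᗮ) (x : Fin d₁ → ℂ) (z : Fin d₂ → ℂ)
    (hxz : ∀ l, x ⬝ᵥ Matrix.of (fun p q => conj ((b l : EuclideanSpace ℂ _) (p, q))) *ᵥ z = 0) :
    x = 0 ∨ z = 0 := by
  by_contra! h
  have hu : WithLp.toLp 2 x ≠ 0 := fun h0 => h.1 (congrArg WithLp.ofLp h0)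
  have hw : WithLp.toLp 2 z ≠ 0 := fun h0 => h.2 (congrArg WithLp.ofLp h0)
  refine hS _ (S.mem_of_forall_inner_basis_orthogonal_eq_zero b fun l => ?_)
    (tp_ne_zero hu hw) ⟨_, _, rfl⟩
  rw [inner_tp]
  exact hxz l

/-- an entangled subspace (containing no nonzero product vector)
of ℂ^{d₁} ⊗ ℂ^{d₂} has dimension at most (d₁ − 1)(d₂ − 1). -/
theorem stmt15 (d₁ d₂ : ℕ) (S : Submodule ℂ (EuclideanSpace ℂ (Fin d₁ × Fin d₂)))
    (hS : ∀ x ∈ S, x ≠ 0 →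
      ¬ ∃ (u : EuclideanSpace ℂ (Fin d₁)) (w : EuclideanSpace ℂ (Fin d₂)), x = tp u w) :
    Module.finrank ℂ S ≤ (d₁ - 1) * (d₂ - 1) := by
  have hdim := S.finrank_add_finrank_orthogonal
  rw [finrank_euclideanSpace, Fintype.card_prod, Fintype.card_fin, Fintype.card_fin] at hdim
  rcases Nat.eq_zero_or_pos d₁ with rfl | h₁
  · simp_all
  rcases Nat.eq_zero_or_pos d₂ with rfl | h₂
  · simp_all
  have : Nonempty (Fin d₁) := ⟨⟨0, h₁⟩⟩
  have : Nonempty (Fin d₂) := ⟨⟨0, h₂⟩⟩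
  have hcard := Segre.card_add_card_le_card_add_one _
    (eq_zero_or_eq_zero_of_forall_inner_tp_eq_zero hS (Module.finBasis ℂ Sᗮ))
  rw [Fintype.card_fin, Fintype.card_fin, Fintype.card_fin] at hcard
  obtain ⟨a, rfl⟩ := Nat.exists_eq_add_of_lt h₁
  obtain ⟨c, rfl⟩ := Nat.exists_eq_add_of_lt h₂
  simp only [zero_add, add_tsub_cancel_right] at hdim hcard ⊢
  nlinarith
end

section
/- In ℂ² ⊗ ℂ², suppose v₁, v₂, v₃ are nonzero product vectors spanning a 3-dimensional subspace S whose orthogonal complement is spanned by an entangled unit vector |ψ⟩. Then for every n ≥ 1, there is no nonzero product vector in (ℂ²)^{⊗n} ⊗ (ℂ²)^{⊗n} (with respect to the bipartite cut grouping all first factors against all second factors, under the natural reordering isomorphism of (ℂ²⊗ℂ²)^{⊗n}) that is orthogonal to all n-fold tensor products v_{i₁} ⊗ v_{i₂} ⊗ ⋯ ⊗ v_{iₙ} of the vectors v₁, v₂, v₃. -/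
/-!
Write `vᵢ = uᵢ ⊗ wᵢ`. A product vector `x ⊗ y` is orthogonal to every `vᵢ` iff for each `i`
either `x ⊥ uᵢ` or `y ⊥ wᵢ`; since the complement of the span of the `vᵢ` is spanned by the
entangled `ψ`, this forces `x = 0` or `y = 0`. Hence, for every splitting of the indices
into `S` and its complement, the `uᵢ` with `i ∈ S` or the `wᵢ` with `i ∉ S` span the whole space.

This splitting property survives tensor powers. For nonzero tensors `a`, `b` on `n + 1` factors,
let `S` be the set of `i` for which contracting the first factor of `a` with `uᵢ` gives zero.
The `uᵢ` with `i ∈ S` cannot span (else `a = 0`), so the `wᵢ` with `i ∉ S` do, and hence some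
`i ∉ S` has both contractions nonzero. Induction on `n` then yields a word `c` with
`⟪u_c, a⟫ ≠ 0` and `⟪w_c, b⟫ ≠ 0`, and `⟪v_c, a ⊗ b⟫` is their product.
-/

open scoped ComplexConjugate

open scoped InnerProductSpace
open Submodule

section Orthogonal

variable {𝕜 E : Type*} [RCLike 𝕜] [NormedAddCommGroup E] [InnerProductSpace 𝕜 E]

theorem mem_orthogonal_span_iff {s : Set E} {x : E} :
    x ∈ (span 𝕜 s)ᗮ ↔ ∀ y ∈ s, ⟪y, x⟫_𝕜 = 0 := by
  refine ⟨fun h y hy => inner_right_of_mem_orthogonal (subset_span hy) h, fun h => ?_⟩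
  rw [mem_orthogonal]
  intro y hy
  induction hy using span_induction with
  | mem y hy => exact h y hy
  | zero => exact inner_zero_left x
  | add y z _ _ hy hz => rw [inner_add_left, hy, hz, add_zero]
  | smul r y _ hy => rw [inner_smul_left, hy, mul_zero]

theorem eq_zero_of_forall_inner_eq_zero_of_span_eq_top {s : Set E} (hs : span 𝕜 s = ⊤)
    {x : E} (h : ∀ y ∈ s, ⟪y, x⟫_𝕜 = 0) : x = 0 := by
  have hx := mem_orthogonal_span_iff.2 h
  rwa [hs, top_orthogonal_eq_bot, mem_bot] at hx

end Orthogonal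

section Unextendible

variable (𝕜 : Type*) {ι E F : Type*} [RCLike 𝕜] [NormedAddCommGroup E] [InnerProductSpace 𝕜 E]
  [NormedAddCommGroup F] [InnerProductSpace 𝕜 F]

/-- Unextendibility of the product family `u i ⊗ w i`, with `⟪u ⊗ w, x ⊗ y⟫ = ⟪u, x⟫ ⟪w, y⟫`
written out so that no tensor product space is needed. -/
def IsUnextendible (u : ι → E) (w : ι → F) : Prop :=
  ∀ x y, (∀ i, ⟪u i, x⟫_𝕜 * ⟪w i, y⟫_𝕜 = 0) → x = 0 ∨ y = 0

variable {𝕜} {u : ι → E} {w : ι → F}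

theorem IsUnextendible.span_eq_top_or [FiniteDimensional 𝕜 E] [FiniteDimensional 𝕜 F]
    (h : IsUnextendible 𝕜 u w) (S : Set ι) :
    span 𝕜 (u '' S) = ⊤ ∨ span 𝕜 (w '' Sᶜ) = ⊤ := by
  by_contra! hS
  obtain ⟨x, hx, hx0⟩ := (Submodule.ne_bot_iff _).1 (mt orthogonal_eq_bot_iff.1 hS.1)
  obtain ⟨y, hy, hy0⟩ := (Submodule.ne_bot_iff _).1 (mt orthogonal_eq_bot_iff.1 hS.2)
  refine (h x y fun i => ?_).elim hx0 hy0
  by_cases hi : i ∈ S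
  · rw [inner_right_of_mem_orthogonal (subset_span (Set.mem_image_of_mem u hi)) hx, zero_mul]
  · rw [inner_right_of_mem_orthogonal (subset_span (Set.mem_image_of_mem w hi)) hy, mul_zero]

end Unextendible

section TensorPower

variable {𝕜 ι κ κ₁ κ₂ : Type*} [RCLike 𝕜] [Fintype κ] [Fintype κ₁] [Fintype κ₂]

/-- `⟪x (c 0) ⊗ ⋯ ⊗ x (c (n - 1)), a⟫`, for a tensor `a` on `n` factors given by its
coefficients. -/
noncomputable def tensorPairing {n : ℕ} (x : ι → EuclideanSpace 𝕜 κ) (c : Fin n → ι)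
    (a : (Fin n → κ) → 𝕜) : 𝕜 :=
  ∑ q, conj (∏ k, x (c k) (q k)) * a q

noncomputable def contractHead {n : ℕ} (y : EuclideanSpace 𝕜 κ) (a : (Fin (n + 1) → κ) → 𝕜) :
    (Fin n → κ) → 𝕜 :=
  fun q => ⟪y, WithLp.toLp 2 fun t => a (Fin.cons t q)⟫_𝕜

theorem tensorPairing_zero (x : ι → EuclideanSpace 𝕜 κ) (c : Fin 0 → ι) (a : (Fin 0 → κ) → 𝕜) :
    tensorPairing x c a = a default := by
  simp [tensorPairing]

theorem tensorPairing_cons {n : ℕ} (x : ι → EuclideanSpace 𝕜 κ) (i : ι) (c : Fin n → ι)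
    (a : (Fin (n + 1) → κ) → 𝕜) :
    tensorPairing x (Fin.cons i c) a = tensorPairing x c (contractHead (x i) a) := by
  rw [tensorPairing, ← (Fin.consEquiv fun _ => κ).sum_comp, Fintype.sum_prod_type,
    Finset.sum_comm, tensorPairing]
  refine Finset.sum_congr rfl fun q _ => ?_
  simp only [contractHead, PiLp.inner_apply, RCLike.inner_apply', Finset.mul_sum,
    Fin.prod_univ_succ, Fin.consEquiv_apply, Fin.cons_zero, Fin.cons_succ, map_mul]
  exact Finset.sum_congr rfl fun t _ => by rw [mul_assoc, mul_left_comm]; rfl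

theorem eq_zero_of_forall_contractHead_eq_zero {n : ℕ} {s : Set (EuclideanSpace 𝕜 κ)}
    (hs : span 𝕜 s = ⊤) {a : (Fin (n + 1) → κ) → 𝕜} (h : ∀ y ∈ s, contractHead y a = 0) :
    a = 0 := by
  funext q
  have hslice := eq_zero_of_forall_inner_eq_zero_of_span_eq_top hs
    fun y hy => congrFun (h y hy) (Fin.tail q)
  simpa [Fin.cons_self_tail] using congrArg (· (q 0)) hslice

theorem IsUnextendible.exists_tensorPairing_ne_zero {u : ι → EuclideanSpace 𝕜 κ₁}
    {w : ι → EuclideanSpace 𝕜 κ₂} (h : IsUnextendible 𝕜 u w) :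
    ∀ {n : ℕ} {a : (Fin n → κ₁) → 𝕜} {b : (Fin n → κ₂) → 𝕜}, a ≠ 0 → b ≠ 0 →
      ∃ c : Fin n → ι, tensorPairing u c a ≠ 0 ∧ tensorPairing w c b ≠ 0
  | 0, a, b, ha, hb => by
    refine ⟨Fin.elim0, ?_, ?_⟩ <;> rw [tensorPairing_zero]
    · exact fun h0 => ha (funext fun q => Subsingleton.elim q default ▸ h0)
    · exact fun h0 => hb (funext fun q => Subsingleton.elim q default ▸ h0)
  | n + 1, a, b, ha, hb => by
    obtain ⟨i, hia, hib⟩ : ∃ i, contractHead (u i) a ≠ 0 ∧ contractHead (w i) b ≠ 0 := by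
      by_contra! hab
      rcases h.span_eq_top_or {i | contractHead (u i) a = 0} with hS | hS
      · refine ha (eq_zero_of_forall_contractHead_eq_zero hS ?_)
        rintro _ ⟨i, hi, rfl⟩
        exact hi
      · refine hb (eq_zero_of_forall_contractHead_eq_zero hS ?_)
        rintro _ ⟨i, hi, rfl⟩
        exact hab i hi
    obtain ⟨c, hca, hcb⟩ := h.exists_tensorPairing_ne_zero hia hib
    exact ⟨Fin.cons i c, by rwa [tensorPairing_cons], by rwa [tensorPairing_cons]⟩

end TensorPower

section ProductVectors

variable {d₁ d₂ : ℕ}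

theorem inner_tp_tp (u x : EuclideanSpace ℂ (Fin d₁)) (w y : EuclideanSpace ℂ (Fin d₂)) :
    ⟪tp u w, tp x y⟫_ℂ = ⟪u, x⟫_ℂ * ⟪w, y⟫_ℂ := by
  simp only [PiLp.inner_apply, RCLike.inner_apply', tp, Fintype.sum_prod_type,
    Finset.sum_mul_sum, map_mul]
  exact Finset.sum_congr rfl fun s _ => Finset.sum_congr rfl fun t _ => by ring

theorem tp_eq_zero_iff {u : EuclideanSpace ℂ (Fin d₁)} {w : EuclideanSpace ℂ (Fin d₂)} :
    tp u w = 0 ↔ u = 0 ∨ w = 0 := by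
  rw [← inner_self_eq_zero (𝕜 := ℂ), inner_tp_tp, mul_eq_zero, inner_self_eq_zero,
    inner_self_eq_zero]

theorem smul_tp (r : ℂ) (u : EuclideanSpace ℂ (Fin d₁)) (w : EuclideanSpace ℂ (Fin d₂)) :
    r • tp u w = tp (r • u) w := by
  ext p
  simp [tp, mul_assoc]

theorem isUnextendible_of_orthogonal_span_eq_span_entangled {ι : Type*}
    {u : ι → EuclideanSpace ℂ (Fin d₁)} {w : ι → EuclideanSpace ℂ (Fin d₂)}
    {ψ : EuclideanSpace ℂ (Fin d₁ × Fin d₂)} (hent : ¬ ∃ x y, ψ = tp x y)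
    (hcomp : (span ℂ (Set.range fun i => tp (u i) (w i)))ᗮ = ℂ ∙ ψ) :
    IsUnextendible ℂ u w := by
  intro x y hxy
  have hmem : tp x y ∈ ℂ ∙ ψ := hcomp ▸ mem_orthogonal_span_iff.2 (by
    rintro _ ⟨i, rfl⟩
    rw [inner_tp_tp, hxy i])
  obtain ⟨r, hr⟩ := mem_span_singleton.1 hmem
  by_contra! h0
  have hr0 : r ≠ 0 := by
    rintro rfl
    exact not_or.2 h0 (tp_eq_zero_iff.1 (by rw [← hr, zero_smul]))
  exact hent ⟨r⁻¹ • x, y, by rw [← smul_tp, ← hr, inv_smul_smul₀ hr0]⟩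

theorem tensorPairing_tp {ι : Type*} {n : ℕ} (u : ι → EuclideanSpace ℂ (Fin d₁))
    (w : ι → EuclideanSpace ℂ (Fin d₂)) (c : Fin n → ι) (a : (Fin n → Fin d₁) → ℂ)
    (b : (Fin n → Fin d₂) → ℂ) :
    tensorPairing (fun i => tp (u i) (w i)) c (fun p => a (fun k => (p k).1) * b (fun k => (p k).2))
      = tensorPairing u c a * tensorPairing w c b := by
  rw [tensorPairing, tensorPairing, tensorPairing, Finset.sum_mul_sum, ← Fintype.sum_prod_type',
    ← (Equiv.arrowProdEquivProdArrow (Fin n) (fun _ => Fin d₁) (fun _ => Fin d₂)).sum_comp]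
  refine Finset.sum_congr rfl fun p _ => ?_
  simp only [tp, PiLp.toLp_apply, Finset.prod_mul_distrib, map_mul,
    Equiv.arrowProdEquivProdArrow_apply]
  ring

end ProductVectors

theorem stmt19_general (v : Fin 3 → EuclideanSpace ℂ (Fin 2 × Fin 2))
    (hvprod : ∀ i, v i ≠ 0 ∧
      ∃ (u : EuclideanSpace ℂ (Fin 2)) (w : EuclideanSpace ℂ (Fin 2)), v i = tp u w)
    (ψ : EuclideanSpace ℂ (Fin 2 × Fin 2))
    (hent : ¬ ∃ (u : EuclideanSpace ℂ (Fin 2)) (w : EuclideanSpace ℂ (Fin 2)), ψ = tp u w)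
    (hcomp : (Submodule.span ℂ (Set.range v))ᗮ = (ℂ ∙ ψ)) :
    ∀ n : ℕ, 1 ≤ n →
      ¬ ∃ (a b : (Fin n → Fin 2) → ℂ), a ≠ 0 ∧ b ≠ 0 ∧
        ∀ c : Fin n → Fin 3,
          (∑ p : Fin n → Fin 2 × Fin 2,
            conj (∏ k, v (c k) (p k)) *
              (a (fun k => (p k).1) * b (fun k => (p k).2))) = 0 := by
  choose u w hv using fun i => (hvprod i).2
  obtain rfl : v = fun i => tp (u i) (w i) := funext hv
  have hunext := isUnextendible_of_orthogonal_span_eq_span_entangled hent hcomp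
  rintro n - ⟨a, b, ha, hb, horth⟩
  obtain ⟨c, hca, hcb⟩ := hunext.exists_tensorPairing_ne_zero ha hb
  exact mul_ne_zero hca hcb ((tensorPairing_tp u w c a b).symm.trans (horth c))

/-- if v₁, v₂, v₃ are nonzero product vectors spanning a
3-dimensional subspace of ℂ²⊗ℂ² whose orthogonal complement is spanned by an
entangled unit vector ψ, then for every n ≥ 1 there is no nonzero product
vector, with respect to the bipartite cut grouping all first factors against
all second factors, orthogonal to all n-fold tensor products of the vᵢ's. -/
theorem stmt19 (v : Fin 3 → EuclideanSpace ℂ (Fin 2 × Fin 2))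
    (hvprod : ∀ i, v i ≠ 0 ∧
      ∃ (u : EuclideanSpace ℂ (Fin 2)) (w : EuclideanSpace ℂ (Fin 2)), v i = tp u w)
    (ψ : EuclideanSpace ℂ (Fin 2 × Fin 2)) (hψn : ‖ψ‖ = 1)
    (hent : ¬ ∃ (u : EuclideanSpace ℂ (Fin 2)) (w : EuclideanSpace ℂ (Fin 2)), ψ = tp u w)
    (hdim : Module.finrank ℂ (Submodule.span ℂ (Set.range v)) = 3)
    (hcomp : (Submodule.span ℂ (Set.range v))ᗮ = (ℂ ∙ ψ)) :
    ∀ n : ℕ, 1 ≤ n →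
      ¬ ∃ (a b : (Fin n → Fin 2) → ℂ), a ≠ 0 ∧ b ≠ 0 ∧
        ∀ c : Fin n → Fin 3,
          (∑ p : Fin n → Fin 2 × Fin 2,
            conj (∏ k, v (c k) (p k)) *
              (a (fun k => (p k).1) * b (fun k => (p k).2))) = 0 :=
  stmt19_general v hvprod ψ hent hcomp
end
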